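/- arXiv:1611.06427 — 2 statements merged into one kernel-verified Lean document; each statement's English description precedes it below -/
import Mathlib

section
/- Let A ∈ ℝ^{m×n} have nonzero columns a_1,…,a_n and full row rank rk(A) = m. Let 0 < ε ≤ 1/(11m) and let v ∈ ℝ^m with ‖v‖ = 1 satisfy â_jᵀv ≥ −ε for all j ∈ [n]. Let A' = (I_m + vvᵀ)A. Then the m-dimensional Lebesgue volume satisfies vol(P_{A'}) ≥ (3/2)·vol(P_A). -/
/-!
With `M = I + vvᵀ` (so `det M = 2`), each unit column `â_j` is mapped to `λ_j â'_j` with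
`λ_j = ‖M â_j‖ = √(1 + 3 t_j²) ≤ 1 + |t_j| ≤ 1 + 2ε + t_j`, where `t_j = vᵀâ_j ≥ -ε`.
Hence if `x = Σ w_j â_j` is a convex combination, `Mx` is a nonnegative combination of the
`â'_j` of total weight at most `1 + 2ε + vᵀx`, and for `x ∈ P_A` also `-x ∈ conv(â_j)` gives
`vᵀx ≤ ε`. As `0 ∈ conv(â'_j)`, this yields `M(P_A) / (1 + 3ε) ⊆ P_{A'}`, so
`vol(P_{A'}) ≥ 2 (1 + 3ε)^{-m} vol(P_A)`, and `(1 + 3ε)^m ≤ e^{3/11} < 4/3`.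
-/

open Matrix Set MeasureTheory Pointwise ENNReal

noncomputable section

/-- Euclidean dot product on `Fin d → ℝ`. -/
def dotp {d : ℕ} (u v : Fin d → ℝ) : ℝ := ∑ i, u i * v i

/-- Euclidean norm on `Fin d → ℝ`. -/
def norm2 {d : ℕ} (v : Fin d → ℝ) : ℝ := Real.sqrt (∑ i, v i ^ 2)

/-- Normalization `v / ‖v‖`, with the convention that `0` is mapped to `0`. -/
def nml {d : ℕ} (v : Fin d → ℝ) : Fin d → ℝ := (norm2 v)⁻¹ • v

/-- The `j`-th column of a matrix. -/
def mcol {d : ℕ} {ι : Type} (A : Matrix (Fin d) ι ℝ) (j : ι) : Fin d → ℝ := fun i => A i j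

/-- Goffin's condition measure `ρ_A = max_{y ∈ im(A) \ {0}} min_j â_jᵀ ŷ`. -/
def goffin {d : ℕ} {ι : Type} [Fintype ι] (A : Matrix (Fin d) ι ℝ) : ℝ :=
  sSup { r : ℝ | ∃ y : Fin d → ℝ, (∃ x : ι → ℝ, A.mulVec x = y) ∧ y ≠ 0 ∧
    r = ⨅ j : ι, dotp (nml (mcol A j)) (nml y) }

/-- The cone `Σ_A = {y : Aᵀ y ≥ 0}`. -/
def SigmaCone {d : ℕ} {ι : Type} (A : Matrix (Fin d) ι ℝ) : Set (Fin d → ℝ) :=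
  { y | ∀ j, 0 ≤ dotp (mcol A j) y }

/-- `F_A = Σ_A ∩ B^d`. -/
def FA {d : ℕ} {ι : Type} (A : Matrix (Fin d) ι ℝ) : Set (Fin d → ℝ) :=
  SigmaCone A ∩ { z | norm2 z ≤ 1 }

/-- `‖v‖_M = √(vᵀ M v)`. -/
def qnorm {d : ℕ} (M : Matrix (Fin d) (Fin d) ℝ) (v : Fin d → ℝ) : ℝ :=
  Real.sqrt (dotp v (M.mulVec v))

/-- The ellipsoid `E(M) = {z : ‖z‖_M ≤ 1}`. -/
def ell {d : ℕ} (M : Matrix (Fin d) (Fin d) ℝ) : Set (Fin d → ℝ) :=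
  { z | qnorm M z ≤ 1 }

/-- The width of a set `X` along `a`: `sup {aᵀz : z ∈ X}`. -/
def widthOf {d : ℕ} (X : Set (Fin d → ℝ)) (a : Fin d → ℝ) : ℝ :=
  sSup { r : ℝ | ∃ z ∈ X, r = dotp a z }

/-- `P_A = conv(â_1,…,â_n) ∩ (−conv(â_1,…,â_n))`. -/
def PA {d : ℕ} {ι : Type} (A : Matrix (Fin d) ι ℝ) : Set (Fin d → ℝ) :=
  convexHull ℝ (Set.range fun j => nml (mcol A j)) ∩
    (-(convexHull ℝ (Set.range fun j => nml (mcol A j))))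

/-- `Δ_A`: maximum of `∏_{j ∈ B} ‖a_j‖` over sets `B` of linearly independent columns. -/
def DeltaA {d n : ℕ} (A : Matrix (Fin d) (Fin n) ℝ) : ℝ :=
  sSup { p : ℝ | ∃ B : Finset (Fin n),
    LinearIndependent ℝ (fun j : {x // x ∈ B} => mcol A j.1) ∧ p = ∏ j ∈ B, norm2 (mcol A j) }

/-- `T*_A`: indices `i` such that some `y` with `Aᵀy ≥ 0` has `a_iᵀ y > 0`. -/
def TstarA {d : ℕ} {ι : Type} (A : Matrix (Fin d) ι ℝ) : Set ι :=
  { i | ∃ y : Fin d → ℝ, (∀ j, 0 ≤ dotp (mcol A j) y) ∧ 0 < dotp (mcol A i) y }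

/-- `S*_A`: indices `i` such that some `x ≥ 0` with `Ax = 0` has `x_i > 0`. -/
def SstarA {d : ℕ} {ι : Type} [Fintype ι] (A : Matrix (Fin d) ι ℝ) : Set ι :=
  { i | ∃ x : ι → ℝ, (∀ j, 0 ≤ x j) ∧ A.mulVec x = 0 ∧ 0 < x i }

/-- `ω_A = min_{i ∈ T*_A} width_{F_A}(â_i)`. -/
def omegaA {d : ℕ} {ι : Type} (A : Matrix (Fin d) ι ℝ) : ℝ :=
  sInf ((fun i => widthOf (FA A) (nml (mcol A i))) '' TstarA A)

section ConvexHull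

variable {E F : Type*} [AddCommGroup E] [Module ℝ E] [AddCommGroup F] [Module ℝ F]

theorem Convex.zero_mem_of_neg_mem {s : Set E} (hs : Convex ℝ s) {x : E} (hx : x ∈ s)
    (hnx : -x ∈ s) : (0 : E) ∈ s := by
  simpa using hs hx hnx (by norm_num : (0 : ℝ) ≤ 1 / 2) (by norm_num : (0 : ℝ) ≤ 1 / 2)
    (by norm_num)

variable {M : E →ₗ[ℝ] F} {f : E → ℝ} {s : Set E} {K : Set F}

theorem exists_map_mem_smul_of_mem_convexHull (hK : Convex ℝ K)
    (hf : ConcaveOn ℝ (convexHull ℝ s) f)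
    (hs : ∀ z ∈ s, ∃ r, 0 < r ∧ r ≤ f z ∧ M z ∈ r • K) {x : E} (hx : x ∈ convexHull ℝ s) :
    ∃ r, 0 < r ∧ r ≤ f x ∧ M x ∈ r • K := by
  suffices h : convexHull ℝ s ⊆
      {x | x ∈ convexHull ℝ s ∧ ∃ r, 0 < r ∧ r ≤ f x ∧ M x ∈ r • K} from (h hx).2
  refine convexHull_min (fun z hz => ⟨subset_convexHull ℝ s hz, hs z hz⟩) ?_
  rintro x ⟨hx, r, hr, hrf, hMx⟩ y ⟨hy, t, ht, htf, hMy⟩ a b ha hb hab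
  refine ⟨convex_convexHull ℝ s hx hy ha hb hab, a * r + b * t, ?_, ?_, ?_⟩
  · rcases ha.eq_or_lt with rfl | ha'
    · simp only [zero_add] at hab; subst hab; simpa using ht
    · positivity
  · calc a * r + b * t ≤ a • f x + b • f y := by
          simp only [smul_eq_mul]; gcongr
      _ ≤ f (a • x + b • y) := hf.2 hx hy ha hb hab
  · rw [map_add, map_smul, map_smul, hK.add_smul (by positivity) (by positivity), mul_smul,
      mul_smul]
    exact Set.add_mem_add (Set.smul_mem_smul_set hMx) (Set.smul_mem_smul_set hMy)

theorem smul_map_mem_of_mem_convexHull (hK : Convex ℝ K)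
    (hf : ConcaveOn ℝ (convexHull ℝ s) f)
    (hs : ∀ z ∈ s, ∃ r, 0 < r ∧ r ≤ f z ∧ M z ∈ r • K) (h0 : (0 : E) ∈ convexHull ℝ s)
    {x : E} (hx : x ∈ convexHull ℝ s) {c : ℝ} (hc : 0 ≤ c) (hcx : c * f x ≤ 1) :
    c • M x ∈ K := by
  have hK0 : (0 : F) ∈ K := by
    obtain ⟨r, hr, -, hM0⟩ := exists_map_mem_smul_of_mem_convexHull hK hf hs h0
    rwa [map_zero, Set.zero_mem_smul_set_iff hr.ne'] at hM0
  obtain ⟨r, hr, hrf, k, hk, hkx⟩ := exists_map_mem_smul_of_mem_convexHull hK hf hs hx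
  rw [← hkx, smul_smul]
  exact hK.smul_mem_of_zero_mem hK0 hk ⟨by positivity, by nlinarith⟩

end ConvexHull

section Norm

variable {d : ℕ}

theorem dotp_eq_dotProduct (u w : Fin d → ℝ) : dotp u w = u ⬝ᵥ w := rfl

theorem norm2_eq_sqrt_dotProduct (w : Fin d → ℝ) : norm2 w = √(w ⬝ᵥ w) := by
  simp only [norm2, dotProduct, sq]

theorem dotProduct_self_nonneg {ι : Type*} [Fintype ι] (w : ι → ℝ) : 0 ≤ w ⬝ᵥ w := by
  simpa using dotProduct_star_self_nonneg w

theorem norm2_sq (w : Fin d → ℝ) : norm2 w ^ 2 = w ⬝ᵥ w := by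
  rw [norm2_eq_sqrt_dotProduct, Real.sq_sqrt (dotProduct_self_nonneg w)]

theorem norm2_pos {w : Fin d → ℝ} (hw : w ≠ 0) : 0 < norm2 w := by
  rw [norm2_eq_sqrt_dotProduct, Real.sqrt_pos]
  exact (dotProduct_self_nonneg w).lt_of_ne' (by simpa [dotProduct_self_eq_zero] using hw)

theorem norm2_smul (c : ℝ) (w : Fin d → ℝ) : norm2 (c • w) = |c| * norm2 w := by
  rw [norm2_eq_sqrt_dotProduct, norm2_eq_sqrt_dotProduct, smul_dotProduct, dotProduct_smul,
    smul_eq_mul, smul_eq_mul, ← mul_assoc, Real.sqrt_mul (mul_self_nonneg c),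
    Real.sqrt_mul_self_eq_abs]

theorem norm2_smul_nml (w : Fin d → ℝ) : norm2 w • nml w = w := by
  rcases eq_or_ne w 0 with rfl | hw
  · simp [nml]
  · rw [nml, smul_smul, mul_inv_cancel₀ (norm2_pos hw).ne', one_smul]

theorem nml_smul_of_pos {c : ℝ} (hc : 0 < c) (w : Fin d → ℝ) : nml (c • w) = nml w := by
  rw [nml, nml, norm2_smul, abs_of_pos hc, smul_smul]
  congr 1
  field_simp

theorem nml_dotProduct_self {w : Fin d → ℝ} (hw : w ≠ 0) : nml w ⬝ᵥ nml w = 1 := by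
  rw [nml, smul_dotProduct, dotProduct_smul, ← norm2_sq, smul_eq_mul, smul_eq_mul]
  field_simp [(norm2_pos hw).ne']

theorem sq_dotProduct_le {ι : Type*} [Fintype ι] (u w : ι → ℝ) :
    (u ⬝ᵥ w) ^ 2 ≤ (u ⬝ᵥ u) * (w ⬝ᵥ w) := by
  simpa only [dotProduct, sq] using Finset.sum_mul_sq_le_sq_mul_sq Finset.univ u w

end Norm

section RankOneUpdate

variable {d : ℕ}

theorem det_one_add_vecMulVec {n α : Type*} [Fintype n] [DecidableEq n] [CommRing α]
    (u w : n → α) : det (1 + vecMulVec u w) = 1 + w ⬝ᵥ u := by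
  rw [vecMulVec_eq Unit, det_one_add_replicateCol_mul_replicateRow]

theorem one_add_vecMulVec_mulVec {n α : Type*} [Fintype n] [DecidableEq n] [CommRing α]
    (u w x : n → α) : (1 + vecMulVec u w) *ᵥ x = x + (w ⬝ᵥ x) • u := by
  rw [add_mulVec, one_mulVec, vecMulVec_mulVec, op_smul_eq_smul]

variable {v : Fin d → ℝ}

theorem norm2_one_add_vecMulVec_mulVec (hv : v ⬝ᵥ v = 1) {p : Fin d → ℝ} (hp : p ⬝ᵥ p = 1) :
    norm2 ((1 + vecMulVec v v) *ᵥ p) = √(1 + 3 * (v ⬝ᵥ p) ^ 2) := by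
  rw [norm2_eq_sqrt_dotProduct, one_add_vecMulVec_mulVec]
  congr 1
  simp only [add_dotProduct, dotProduct_add, smul_dotProduct, dotProduct_smul, smul_eq_mul,
    dotProduct_comm p v, hv, hp]
  ring

theorem one_le_norm2_one_add_vecMulVec_mulVec (hv : v ⬝ᵥ v = 1) {p : Fin d → ℝ}
    (hp : p ⬝ᵥ p = 1) : 1 ≤ norm2 ((1 + vecMulVec v v) *ᵥ p) := by
  rw [norm2_one_add_vecMulVec_mulVec hv hp, Real.one_le_sqrt]
  nlinarith [sq_nonneg (v ⬝ᵥ p)]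

theorem norm2_one_add_vecMulVec_mulVec_le (hv : v ⬝ᵥ v = 1) {p : Fin d → ℝ}
    (hp : p ⬝ᵥ p = 1) : norm2 ((1 + vecMulVec v v) *ᵥ p) ≤ 1 + |v ⬝ᵥ p| := by
  have hcs : (v ⬝ᵥ p) ^ 2 ≤ 1 := by simpa [hv, hp] using sq_dotProduct_le v p
  have habs : |v ⬝ᵥ p| ≤ 1 := abs_le_one_iff_mul_self_le_one.2 (by nlinarith)
  rw [norm2_one_add_vecMulVec_mulVec hv hp, Real.sqrt_le_iff]
  refine ⟨by positivity, ?_⟩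
  nlinarith [sq_abs (v ⬝ᵥ p), abs_nonneg (v ⬝ᵥ p)]

end RankOneUpdate

section Columns

variable {d : ℕ}

theorem mcol_mul {ι : Type} (M : Matrix (Fin d) (Fin d) ℝ) (A : Matrix (Fin d) ι ℝ) (j : ι) :
    mcol (M * A) j = M *ᵥ mcol A j := by
  ext i
  simp [mcol, mul_apply, mulVec, dotProduct]

theorem mulVec_nml_eq_smul_nml_mulVec (M : Matrix (Fin d) (Fin d) ℝ) {a : Fin d → ℝ}
    (ha : a ≠ 0) : M *ᵥ nml a = norm2 (M *ᵥ nml a) • nml (M *ᵥ a) := by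
  have hMa : M *ᵥ a = norm2 a • M *ᵥ nml a := by rw [← mulVec_smul, norm2_smul_nml]
  rw [hMa, nml_smul_of_pos (norm2_pos ha), norm2_smul_nml]

end Columns

section Rescaling

variable {m n : ℕ} {A : Matrix (Fin m) (Fin n) ℝ} {ε : ℝ} {v : Fin m → ℝ}

theorem smul_one_add_vecMulVec_mulVec_mem_convexHull (hcols : ∀ j, mcol A j ≠ 0)
    (hε : 0 ≤ ε) (hv : v ⬝ᵥ v = 1) (hang : ∀ j, -ε ≤ dotp (nml (mcol A j)) v) {x : Fin m → ℝ}
    (hx : x ∈ convexHull ℝ (range fun j => nml (mcol A j)))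
    (hnx : -x ∈ convexHull ℝ (range fun j => nml (mcol A j))) :
    (1 + 3 * ε)⁻¹ • ((1 + vecMulVec v v) *ᵥ x) ∈
      convexHull ℝ (range fun j => nml (mcol ((1 + vecMulVec v v) * A) j)) := by
  set C := convexHull ℝ (range fun j => nml (mcol A j))
  have hvp : ∀ j, -ε ≤ v ⬝ᵥ nml (mcol A j) := fun j => by
    rw [dotProduct_comm, ← dotp_eq_dotProduct]; exact hang j
  have hC : C ⊆ {z | -ε ≤ v ⬝ᵥ z} :=
    convexHull_min (by rintro _ ⟨j, rfl⟩; exact hvp j)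
      (convex_halfSpace_ge (dotProductBilin ℝ ℝ v).isLinear _)
  have hf : ConcaveOn ℝ C fun z => 1 + 2 * ε + v ⬝ᵥ z :=
    (concaveOn_const _ (convex_convexHull ℝ _)).add
      ((dotProductBilin ℝ ℝ v).concaveOn (convex_convexHull ℝ _))
  have hxv : v ⬝ᵥ x ≤ ε := by
    have := hC hnx
    simp only [mem_ofPred_eq, dotProduct_neg] at this
    linarith
  refine smul_map_mem_of_mem_convexHull (M := toLin' (1 + vecMulVec v v))
    (convex_convexHull ℝ _) hf ?_ ((convex_convexHull ℝ _).zero_mem_of_neg_mem hx hnx) hx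
    (by positivity) ?_
  · rintro _ ⟨j, rfl⟩
    have hp := nml_dotProduct_self (hcols j)
    have hMp := mulVec_nml_eq_smul_nml_mulVec (1 + vecMulVec v v) (hcols j)
    rw [← mcol_mul] at hMp
    refine ⟨_, one_pos.trans_le (one_le_norm2_one_add_vecMulVec_mulVec hv hp), ?_,
      mem_smul_set.2 ⟨_, subset_convexHull ℝ _ (mem_range_self j), hMp.symm⟩⟩
    have habs : |v ⬝ᵥ nml (mcol A j)| ≤ v ⬝ᵥ nml (mcol A j) + 2 * ε :=
      abs_le.2 ⟨by linarith [hvp j], by linarith⟩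
    linarith [norm2_one_add_vecMulVec_mulVec_le hv hp]
  · rw [inv_mul_le_iff₀ (by positivity)]
    linarith

theorem smul_image_PA_subset (hcols : ∀ j, mcol A j ≠ 0) (hε : 0 ≤ ε) (hv : v ⬝ᵥ v = 1)
    (hang : ∀ j, -ε ≤ dotp (nml (mcol A j)) v) :
    (1 + 3 * ε)⁻¹ • (toLin' (1 + vecMulVec v v) '' PA A) ⊆ PA ((1 + vecMulVec v v) * A) := by
  rintro _ ⟨_, ⟨x, ⟨hx, hnx⟩, rfl⟩, rfl⟩
  rw [mem_neg] at hnx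
  rw [toLin'_apply]
  refine ⟨smul_one_add_vecMulVec_mulVec_mem_convexHull hcols hε hv hang hx hnx, ?_⟩
  rw [mem_neg, ← smul_neg, ← mulVec_neg]
  exact smul_one_add_vecMulVec_mulVec_mem_convexHull hcols hε hv hang hnx (by rwa [neg_neg])

end Rescaling

theorem one_add_pow_le_four_thirds {x : ℝ} (hx : 0 ≤ x) {k : ℕ} (hxk : k * x ≤ 3 / 11) :
    (1 + x) ^ k ≤ 4 / 3 := by
  have hexp : Real.exp (3 / 11) ≤ 4 / 3 := by
    refine le_of_pow_le_pow_left₀ (n := 11) (by norm_num) (by norm_num) ?_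
    rw [← Real.exp_nat_mul, show ((11 : ℕ) : ℝ) * (3 / 11) = (3 : ℕ) * 1 by norm_num,
      Real.exp_nat_mul]
    calc Real.exp 1 ^ 3 ≤ 2.7182818286 ^ 3 := by gcongr; exact Real.exp_one_lt_d9.le
      _ ≤ (4 / 3) ^ 11 := by norm_num
  calc (1 + x) ^ k ≤ Real.exp x ^ k := by gcongr; linarith [Real.add_one_le_exp x]
    _ = Real.exp (k * x) := (Real.exp_nat_mul x k).symm
    _ ≤ Real.exp (3 / 11) := Real.exp_le_exp.2 hxk
    _ ≤ 4 / 3 := hexp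

theorem rescale_volume_PA_general
    {m n : ℕ} (A : Matrix (Fin m) (Fin n) ℝ) (hcols : ∀ j, mcol A j ≠ 0)
    (ε : ℝ) (hε : 0 < ε) (hεr : ε ≤ 1 / (11 * (m : ℝ)))
    (v : Fin m → ℝ) (hv : norm2 v = 1)
    (hang : ∀ j, -ε ≤ dotp (nml (mcol A j)) v) :
    (3 / 2 : ℝ≥0∞) * volume (PA A) ≤ volume (PA ((1 + vecMulVec v v) * A)) := by
  have hv' : v ⬝ᵥ v = 1 := by rw [← norm2_sq, hv, one_pow]
  have hdet : LinearMap.det (toLin' (1 + vecMulVec v v)) = 2 := by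
    rw [LinearMap.det_toLin', det_one_add_vecMulVec, hv']; norm_num
  have hεm : m * (3 * ε) ≤ 3 / 11 := by
    rcases (Nat.cast_nonneg (α := ℝ) m).eq_or_lt with hm | hm
    · rw [← hm]; norm_num
    · rw [le_div_iff₀ (by positivity)] at hεr; linarith
  have hcoeff : (3 / 2 : ℝ≥0∞) ≤ ENNReal.ofReal (|(1 + 3 * ε)⁻¹ ^ m| * |2|) := by
    rw [abs_of_pos (by positivity), abs_two, inv_pow, inv_mul_eq_div,
      ENNReal.le_ofReal_iff_toReal_le (ENNReal.div_ne_top (by simp) (by simp)) (by positivity),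
      le_div_iff₀ (by positivity)]
    norm_num
    linarith [one_add_pow_le_four_thirds (by positivity) hεm]
  calc (3 / 2 : ℝ≥0∞) * volume (PA A)
      ≤ ENNReal.ofReal (|(1 + 3 * ε)⁻¹ ^ m| * |2|) * volume (PA A) := by gcongr
    _ = volume ((1 + 3 * ε)⁻¹ • (toLin' (1 + vecMulVec v v) '' PA A)) := by
        rw [Measure.addHaar_smul, Measure.addHaar_image_linearMap, hdet, Module.finrank_fin_fun,
          ← mul_assoc, ← ENNReal.ofReal_mul (by positivity)]
    _ ≤ volume (PA ((1 + vecMulVec v v) * A)) :=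
        measure_mono (smul_image_PA_subset hcols hε.le hv' hang)

/-- Lemma 2.2(ii): for a full row rank matrix `A`, `0 < ε ≤ 1/(11 m)`, a unit vector `v`
with `â_jᵀ v ≥ -ε` for all `j`, and `A' = (I + vvᵀ)A`, the Lebesgue volume satisfies
`vol(P_{A'}) ≥ (3/2)·vol(P_A)`. -/
theorem rescale_volume_PA
    {m n : ℕ} (A : Matrix (Fin m) (Fin n) ℝ) (hcols : ∀ j, mcol A j ≠ 0)
    (hrk : A.rank = m)
    (ε : ℝ) (hε : 0 < ε) (hεr : ε ≤ 1 / (11 * (m : ℝ)))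
    (v : Fin m → ℝ) (hv : norm2 v = 1)
    (hang : ∀ j, -ε ≤ dotp (nml (mcol A j)) v) :
    (3 / 2 : ℝ≥0∞) * volume (PA A) ≤ volume (PA ((1 + vecMulVec v v) * A)) :=
  rescale_volume_PA_general A hcols ε hε hεr v hv hang
end
end

section
/- Let A ∈ ℝ^{m×n}, let H ⊆ ℝ^m be an r-dimensional linear subspace such that Σ_A ⊆ H, let U ∈ ℝ^{m×r} have columns forming an orthonormal basis of H, and let A' = UᵀA. Then for every v ∈ ℝ^m and w = Uᵀv: width_{F_A}(v) = width_{F_{A'}}(w), and width_{F_A}(v̂) ≤ width_{F_{A'}}(ŵ). -/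
open Matrix Set MeasureTheory Pointwise ENNReal

noncomputable section

lemma dotp_comm {d : ℕ} (u v : Fin d → ℝ) : dotp u v = dotp v u := by
  simp [dotp, mul_comm]
lemma dotp_adj {m r : ℕ} (M : Matrix (Fin m) (Fin r) ℝ) (v : Fin m → ℝ) (z : Fin r → ℝ) :
    dotp (Mᵀ.mulVec v) z = dotp v (M.mulVec z) := by
  simp only [dotp, Matrix.mulVec, dotProduct, Matrix.transpose_apply,
    Finset.sum_mul, Finset.mul_sum]
  rw [Finset.sum_comm]
  exact Finset.sum_congr rfl fun i _ => Finset.sum_congr rfl fun k _ => by ring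
lemma mcol_mul_s18 {m r n : ℕ} (B : Matrix (Fin r) (Fin m) ℝ) (A : Matrix (Fin m) (Fin n) ℝ)
    (j : Fin n) : mcol (B * A) j = B.mulVec (mcol A j) := by
  ext i; simp [mcol, Matrix.mul_apply, Matrix.mulVec, dotProduct]
lemma dotp_self_eq {d : ℕ} (v : Fin d → ℝ) : dotp v v = ∑ i, v i ^ 2 := by
  simp [dotp, sq]
lemma norm2_eq_sqrt_dotp {d : ℕ} (v : Fin d → ℝ) : norm2 v = Real.sqrt (dotp v v) := by
  rw [norm2, dotp_self_eq]
lemma UtU_mulVec {m r : ℕ} {U : Matrix (Fin m) (Fin r) ℝ} (hUo : Uᵀ * U = 1)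
    (z : Fin r → ℝ) : Uᵀ.mulVec (U.mulVec z) = z := by
  rw [Matrix.mulVec_mulVec, hUo, Matrix.one_mulVec]
lemma dotp_U_U {m r : ℕ} {U : Matrix (Fin m) (Fin r) ℝ} (hUo : Uᵀ * U = 1)
    (z : Fin r → ℝ) : dotp (U.mulVec z) (U.mulVec z) = dotp z z := by
  rw [dotp_comm, ← dotp_adj, UtU_mulVec hUo]
lemma norm2_U {m r : ℕ} {U : Matrix (Fin m) (Fin r) ℝ} (hUo : Uᵀ * U = 1)
    (z : Fin r → ℝ) : norm2 (U.mulVec z) = norm2 z := by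
  rw [norm2_eq_sqrt_dotp, norm2_eq_sqrt_dotp, dotp_U_U hUo]
lemma norm2_nonneg {d : ℕ} (v : Fin d → ℝ) : 0 ≤ norm2 v := Real.sqrt_nonneg _
lemma cauchy {d : ℕ} (a z : Fin d → ℝ) : dotp a z ≤ norm2 a * norm2 z := by
  calc dotp a z ≤ |dotp a z| := le_abs_self _
    _ ≤ norm2 a * norm2 z := by
        rw [← Real.sqrt_sq_eq_abs, norm2, norm2, ← Real.sqrt_mul (by positivity)]
        apply Real.sqrt_le_sqrt
        calc (dotp a z)^2 ≤ (∑ i, a i^2) * (∑ i, z i^2) := by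
              simpa [dotp, sq] using Finset.sum_mul_sq_le_sq_mul_sq Finset.univ a z
          _ = _ := rfl
lemma norm2_Ut_le {m r : ℕ} {U : Matrix (Fin m) (Fin r) ℝ} (hUo : Uᵀ * U = 1)
    (v : Fin m → ℝ) : norm2 (Uᵀ.mulVec v) ≤ norm2 v := by
  set w := Uᵀ.mulVec v with hw
  set p := U.mulVec w with hp
  have hvp : dotp v p = dotp w w := by rw [hp, ← dotp_adj, ← hw]
  have hpp : dotp p p = dotp w w := dotp_U_U hUo w
  have key : ∑ i, w i ^ 2 ≤ ∑ i, v i ^ 2 := by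
    have h1 : (0:ℝ) ≤ ∑ i, (v i - p i)^2 := Finset.sum_nonneg fun i _ => sq_nonneg _
    have h2 : ∑ i, (v i - p i)^2 = (∑ i, v i^2) - 2 * dotp v p + dotp p p := by
      rw [dotp, dotp, Finset.mul_sum, ← Finset.sum_sub_distrib, ← Finset.sum_add_distrib]
      exact Finset.sum_congr rfl fun i _ => by ring
    rw [h2, hvp, hpp] at h1
    have h3 : dotp w w = ∑ i, w i ^ 2 := dotp_self_eq w
    linarith
  exact Real.sqrt_le_sqrt key
lemma dotp_zero_right {d : ℕ} (a : Fin d → ℝ) : dotp a 0 = 0 := by simp [dotp]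
lemma zero_mem_FA {d n : ℕ} (M : Matrix (Fin d) (Fin n) ℝ) : (0 : Fin d → ℝ) ∈ FA M := by
  constructor
  · intro j; simp [dotp_zero_right]
  · simp [norm2, Real.sqrt_eq_zero']
lemma width_set_nonempty {d n : ℕ} (M : Matrix (Fin d) (Fin n) ℝ) (a : Fin d → ℝ) :
    (0:ℝ) ∈ { r : ℝ | ∃ z ∈ FA M, r = dotp a z } :=
  ⟨0, zero_mem_FA M, (dotp_zero_right a).symm⟩
lemma width_set_bdd {d n : ℕ} (M : Matrix (Fin d) (Fin n) ℝ) (a : Fin d → ℝ) :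
    BddAbove { r : ℝ | ∃ z ∈ FA M, r = dotp a z } := by
  refine ⟨norm2 a, fun x hx => ?_⟩
  obtain ⟨z, ⟨_, hz⟩, rfl⟩ := hx
  calc dotp a z ≤ norm2 a * norm2 z := cauchy a z
    _ ≤ norm2 a * 1 := by
        exact mul_le_mul_of_nonneg_left hz (norm2_nonneg a)
    _ = norm2 a := mul_one _
lemma width_nonneg {d n : ℕ} (M : Matrix (Fin d) (Fin n) ℝ) (a : Fin d → ℝ) :
    0 ≤ widthOf (FA M) a :=
  le_csSup (width_set_bdd M a) (width_set_nonempty M a)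
lemma dotp_smul_left {d : ℕ} (c : ℝ) (a z : Fin d → ℝ) : dotp (c • a) z = c * dotp a z := by
  simp [dotp, Finset.mul_sum]; exact Finset.sum_congr rfl fun i _ => by ring
lemma width_smul {d n : ℕ} (M : Matrix (Fin d) (Fin n) ℝ) (a : Fin d → ℝ) {c : ℝ}
    (hc : 0 ≤ c) : widthOf (FA M) (c • a) = c * widthOf (FA M) a := by
  have hset : { r : ℝ | ∃ z ∈ FA M, r = dotp (c • a) z }
      = c • { r : ℝ | ∃ z ∈ FA M, r = dotp a z } := by
    ext x
    simp only [Set.mem_setOf_eq, Set.mem_smul_set, smul_eq_mul]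
    constructor
    · rintro ⟨z, hz, rfl⟩; exact ⟨dotp a z, ⟨z, hz, rfl⟩, (dotp_smul_left c a z).symm⟩
    · rintro ⟨y, ⟨z, hz, rfl⟩, rfl⟩; exact ⟨z, hz, (dotp_smul_left c a z).symm⟩
  rw [widthOf, hset, Real.sSup_smul_of_nonneg hc, smul_eq_mul, widthOf]
lemma norm2_eq_zero {d : ℕ} {v : Fin d → ℝ} (h : norm2 v = 0) : v = 0 := by
  rw [norm2, Real.sqrt_eq_zero (by positivity)] at h
  ext i
  have := (Finset.sum_eq_zero_iff_of_nonneg (fun i _ => sq_nonneg (v i))).1 h i (Finset.mem_univ i)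
  exact pow_eq_zero_iff (two_ne_zero) |>.1 this
lemma width_zero {d n : ℕ} (M : Matrix (Fin d) (Fin n) ℝ) :
    widthOf (FA M) (0 : Fin d → ℝ) = 0 := by
  have := width_smul M (0 : Fin d → ℝ) (c := 0) le_rfl
  simpa using this

/-- Lemma 4.9(ii): if `H` is an `r`-dimensional subspace with `Σ_A ⊆ H` and the columns
of `U` form an orthonormal basis of `H`, then for `A' = UᵀA`, every `v ∈ ℝ^m` and
`w = Uᵀv` satisfy `width_{F_A}(v) = width_{F_{A'}}(w)` and
`width_{F_A}(v̂) ≤ width_{F_{A'}}(ŵ)`. -/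
theorem width_FA_eq_and_le
    {m n r : ℕ} (A : Matrix (Fin m) (Fin n) ℝ)
    (H : Submodule ℝ (Fin m → ℝ)) (hHr : Module.finrank ℝ H = r)
    (hSigH : SigmaCone A ⊆ (H : Set (Fin m → ℝ)))
    (U : Matrix (Fin m) (Fin r) ℝ) (hUo : Uᵀ * U = 1)
    (hUH : ∀ x : Fin m → ℝ, (∃ c : Fin r → ℝ, U.mulVec c = x) ↔ x ∈ H) :
    ∀ v : Fin m → ℝ,
      widthOf (FA A) v = widthOf (FA (Uᵀ * A)) (Uᵀ.mulVec v) ∧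
      widthOf (FA A) (nml v) ≤ widthOf (FA (Uᵀ * A)) (nml (Uᵀ.mulVec v)) := by
  have part1 : ∀ v : Fin m → ℝ, widthOf (FA A) v = widthOf (FA (Uᵀ * A)) (Uᵀ.mulVec v) := by
    intro v
    unfold widthOf
    congr 1
    ext s
    constructor
    · rintro ⟨z, ⟨hz1, hz2⟩, rfl⟩
      obtain ⟨c, hc⟩ := (hUH z).2 (hSigH hz1)
      have hrec : U.mulVec (Uᵀ.mulVec z) = z := by
        rw [← hc, UtU_mulVec hUo]
      refine ⟨Uᵀ.mulVec z, ⟨fun j => ?_, ?_⟩, ?_⟩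
      · rw [mcol_mul_s18, dotp_adj, hrec]; exact hz1 j
      · calc norm2 (Uᵀ.mulVec z) = norm2 (U.mulVec (Uᵀ.mulVec z)) := (norm2_U hUo _).symm
          _ = norm2 z := by rw [hrec]
          _ ≤ 1 := hz2
      · rw [dotp_adj, hrec]
    · rintro ⟨z, ⟨hz1, hz2⟩, rfl⟩
      refine ⟨U.mulVec z, ⟨fun j => ?_, ?_⟩, ?_⟩
      · have h := hz1 j; rw [mcol_mul_s18, dotp_adj] at h; exact h
      · show norm2 (U.mulVec z) ≤ 1
        rw [norm2_U hUo]; exact hz2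
      · rw [dotp_adj]
  intro v
  refine ⟨part1 v, ?_⟩
  set w := Uᵀ.mulVec v with hw
  have hnml : Uᵀ.mulVec (nml v) = (norm2 v)⁻¹ • w := by
    rw [nml, Matrix.mulVec_smul]
  have h1 : widthOf (FA A) (nml v) = (norm2 v)⁻¹ * widthOf (FA (Uᵀ*A)) w := by
    rw [part1 (nml v), hnml, width_smul _ _ (inv_nonneg.2 (norm2_nonneg v))]
  have h2 : widthOf (FA (Uᵀ*A)) (nml w) = (norm2 w)⁻¹ * widthOf (FA (Uᵀ*A)) w := by
    rw [nml, width_smul _ _ (inv_nonneg.2 (norm2_nonneg w))]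
  rw [h1, h2]
  by_cases hw0 : norm2 w = 0
  · have : w = 0 := norm2_eq_zero hw0
    rw [this, width_zero]
    simp
  · have hpos : 0 < norm2 w := lt_of_le_of_ne (norm2_nonneg w) (Ne.symm hw0)
    have hle : norm2 w ≤ norm2 v := norm2_Ut_le hUo v
    exact mul_le_mul_of_nonneg_right (inv_anti₀ hpos hle) (width_nonneg _ _)
end
end
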